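/- arXiv:2106.12301 — 2 statements merged into one kernel-verified Lean document; each statement's English description precedes it below -/
import Mathlib

section
/- Let a > 0 and let C = [[c₁₁, c₁₂],[c₁₂, c₁₁]] be a real symmetric 2×2 matrix with c₁₁ > |c₁₂| > 0. For b ∈ ℝ define 𝒞(b) = diag(a + ib, a − ib) · C ∈ ℂ^{2×2} and b* = a c₁₂ / √(c₁₁² − c₁₂²). Then the two eigenvalues of 𝒞(b) coincide if and only if b² = (b*)²; if b² < (b*)² the eigenvalues are distinct real numbers; and if b² > (b*)² the eigenvalues form a pair λ, λ̄ with equal (nonzero) real part 0 apart from the common shift a c₁₁, i.e. the eigenvalues are a c₁₁ ± i√((a²+b²)(c₁₁²−c₁₂²) − a²c₁₁²) with nonreal square-root part. -/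
/-!
The matrix `diag(a + ib, a - ib) · C` has real trace `2 a c₁₁` and real determinant
`|a + ib|² det C = (a² + b²)(c₁₁² - c₁₂²)`, so its eigenvalues are `a c₁₁ ± √(-Δ)` with
`Δ = det - (a c₁₁)² = (c₁₁² - c₁₂²)(b² - b*²)`. The sign of `b² - b*²` therefore decides whether
the eigenvalues coincide, are two distinct reals, or form a conjugate pair.
-/

open Complex

theorem Matrix.spectrum_fin_two_eq_pair {K : Type*} [Field K] (M : Matrix (Fin 2) (Fin 2) K) {s t : K}
    (hsum : s + t = M.trace) (hprod : s * t = M.det) : spectrum K M = {s, t} := by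
  ext z
  have hchar : M.charpoly.eval z = (z - s) * (z - t) := by
    rw [Matrix.charpoly_fin_two, ← hsum, ← hprod]
    simp only [Polynomial.eval_add, Polynomial.eval_sub, Polynomial.eval_mul, Polynomial.eval_pow,
      Polynomial.eval_X, Polynomial.eval_C]
    ring
  rw [Matrix.mem_spectrum_iff_isRoot_charpoly, Polynomial.IsRoot.def, hchar, mul_eq_zero,
    sub_eq_zero, sub_eq_zero, Set.mem_insert_iff, Set.mem_singleton_iff]

theorem Set.existsUnique_mem_pair_iff {α : Type*} {s t : α} :
    (∃! x, x ∈ ({s, t} : Set α)) ↔ s = t := by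
  constructor
  · rintro ⟨x, -, hx⟩
    exact (hx s (by simp)).trans (hx t (by simp)).symm
  · rintro rfl
    simp

section RealTraceDet

variable {M : Matrix (Fin 2) (Fin 2) ℂ} {T D : ℝ}

theorem spectrum_eq_of_sq_le_det (htr : M.trace = 2 * T) (hdet : M.det = D) (h : T ^ 2 ≤ D) :
    spectrum ℂ M = {(T : ℂ) + I * (√(D - T ^ 2) : ℂ), (T : ℂ) - I * (√(D - T ^ 2) : ℂ)} := by
  have hsq : (√(D - T ^ 2) : ℂ) ^ 2 = D - T ^ 2 := by
    exact_mod_cast Real.sq_sqrt (sub_nonneg.mpr h)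
  refine M.spectrum_fin_two_eq_pair (by rw [htr]; ring) ?_
  rw [hdet]
  linear_combination hsq - (√(D - T ^ 2) : ℂ) ^ 2 * I_sq

theorem spectrum_eq_of_det_le_sq (htr : M.trace = 2 * T) (hdet : M.det = D) (h : D ≤ T ^ 2) :
    spectrum ℂ M = {((T + √(T ^ 2 - D) : ℝ) : ℂ), ((T - √(T ^ 2 - D) : ℝ) : ℂ)} := by
  have hsq : √(T ^ 2 - D) ^ 2 = T ^ 2 - D := Real.sq_sqrt (sub_nonneg.mpr h)
  refine M.spectrum_fin_two_eq_pair (by rw [htr]; push_cast; ring) ?_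
  rw [hdet]
  exact_mod_cast (by linear_combination -hsq : (T + √(T ^ 2 - D)) * (T - √(T ^ 2 - D)) = D)

theorem existsUnique_mem_spectrum_iff (htr : M.trace = 2 * T) (hdet : M.det = D) :
    (∃! μ, μ ∈ spectrum ℂ M) ↔ D = T ^ 2 := by
  rcases le_total (T ^ 2) D with h | h
  · rw [spectrum_eq_of_sq_le_det htr hdet h, Set.existsUnique_mem_pair_iff,
      sub_eq_add_neg (T : ℂ), add_right_inj, self_eq_neg, mul_eq_zero,
      or_iff_right I_ne_zero, ofReal_eq_zero, Real.sqrt_eq_zero', sub_nonpos]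
    exact ⟨fun h' => le_antisymm h' h, le_of_eq⟩
  · rw [spectrum_eq_of_det_le_sq htr hdet h, Set.existsUnique_mem_pair_iff, ofReal_inj,
      sub_eq_add_neg T, add_right_inj, self_eq_neg, Real.sqrt_eq_zero', sub_nonpos]
    exact ⟨fun h' => le_antisymm h h', ge_of_eq⟩

end RealTraceDet

def ptDimerMatrix (a b c11 c12 : ℝ) : Matrix (Fin 2) (Fin 2) ℂ :=
  Matrix.diagonal ![(a : ℂ) + b * I, (a : ℂ) - b * I] * !![(c11 : ℂ), c12; c12, c11]

theorem trace_ptDimerMatrix (a b c11 c12 : ℝ) :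
    (ptDimerMatrix a b c11 c12).trace = 2 * (a * c11 : ℝ) := by
  simp [ptDimerMatrix, Matrix.trace_fin_two]
  ring

theorem det_ptDimerMatrix (a b c11 c12 : ℝ) :
    (ptDimerMatrix a b c11 c12).det = ((a ^ 2 + b ^ 2) * (c11 ^ 2 - c12 ^ 2) : ℝ) := by
  simp [ptDimerMatrix, Matrix.det_fin_two]
  linear_combination -(b : ℂ) ^ 2 * (c11 ^ 2 - c12 ^ 2 : ℂ) * I_sq

theorem det_sub_sq_eq_mul_sub_sq {a b c11 c12 : ℝ} (h : c12 ^ 2 < c11 ^ 2) :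
    (a ^ 2 + b ^ 2) * (c11 ^ 2 - c12 ^ 2) - (a * c11) ^ 2 =
      (c11 ^ 2 - c12 ^ 2) * (b ^ 2 - (a * c12 / √(c11 ^ 2 - c12 ^ 2)) ^ 2) := by
  have hd : 0 < c11 ^ 2 - c12 ^ 2 := sub_pos.mpr h
  rw [div_pow, Real.sq_sqrt hd.le]
  field_simp
  ring

theorem stmt_4_general (a c11 c12 : ℝ) (hc : |c12| < c11) :
    ∀ b : ℝ,
      let C : Matrix (Fin 2) (Fin 2) ℂ := !![(c11 : ℂ), (c12 : ℂ); (c12 : ℂ), (c11 : ℂ)]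
      let M : Matrix (Fin 2) (Fin 2) ℂ :=
        Matrix.diagonal ![(a : ℂ) + b * Complex.I, (a : ℂ) - b * Complex.I] * C
      let bstar : ℝ := a * c12 / Real.sqrt (c11 ^ 2 - c12 ^ 2)
      ((∃! lam : ℂ, lam ∈ spectrum ℂ M) ↔ b ^ 2 = bstar ^ 2) ∧
      (b ^ 2 < bstar ^ 2 →
        ∃ l1 l2 : ℝ, l1 ≠ l2 ∧ spectrum ℂ M = {(l1 : ℂ), (l2 : ℂ)}) ∧
      (b ^ 2 > bstar ^ 2 →
        0 < (a ^ 2 + b ^ 2) * (c11 ^ 2 - c12 ^ 2) - a ^ 2 * c11 ^ 2 ∧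
        spectrum ℂ M =
          {((a * c11 : ℝ) : ℂ) + Complex.I *
              (Real.sqrt ((a ^ 2 + b ^ 2) * (c11 ^ 2 - c12 ^ 2) - a ^ 2 * c11 ^ 2) : ℂ),
           ((a * c11 : ℝ) : ℂ) - Complex.I *
              (Real.sqrt ((a ^ 2 + b ^ 2) * (c11 ^ 2 - c12 ^ 2) - a ^ 2 * c11 ^ 2) : ℂ)}) := by
  intro b C M bstar
  obtain ⟨hc_neg, hc_pos⟩ := abs_lt.mp hc
  have hsq : c12 ^ 2 < c11 ^ 2 := sq_lt_sq' hc_neg hc_pos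
  have hd : 0 < c11 ^ 2 - c12 ^ 2 := sub_pos.mpr hsq
  have htr : M.trace = 2 * (a * c11 : ℝ) := trace_ptDimerMatrix a b c11 c12
  have hdet : M.det = ((a ^ 2 + b ^ 2) * (c11 ^ 2 - c12 ^ 2) : ℝ) := det_ptDimerMatrix a b c11 c12
  have hdiscr := det_sub_sq_eq_mul_sub_sq (a := a) (b := b) hsq
  rw [← mul_pow]
  refine ⟨?_, fun hlt => ?_, fun hgt => ?_⟩
  · rw [existsUnique_mem_spectrum_iff htr hdet, ← sub_eq_zero, hdiscr, mul_eq_zero,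
      or_iff_right hd.ne', sub_eq_zero]
  · have hneg : (a ^ 2 + b ^ 2) * (c11 ^ 2 - c12 ^ 2) - (a * c11) ^ 2 < 0 := by
      rw [hdiscr]; exact mul_neg_of_pos_of_neg hd (sub_neg.mpr hlt)
    have hroot : 0 < √((a * c11) ^ 2 - (a ^ 2 + b ^ 2) * (c11 ^ 2 - c12 ^ 2)) :=
      Real.sqrt_pos.mpr (by linarith)
    exact ⟨_, _, by linarith, spectrum_eq_of_det_le_sq htr hdet (by linarith)⟩
  · have hpos : 0 < (a ^ 2 + b ^ 2) * (c11 ^ 2 - c12 ^ 2) - (a * c11) ^ 2 := by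
      rw [hdiscr]; exact mul_pos hd (sub_pos.mpr hgt)
    exact ⟨hpos, spectrum_eq_of_sq_le_det htr hdet (by linarith)⟩

/-- Exceptional point of a 𝒫𝒯-symmetric pair of subwavelength resonators:
the eigenvalues of `𝒞(b) = diag(a+ib, a-ib)·C` coincide iff `b² = (b*)²`,
are distinct real numbers when `b² < (b*)²`, and form a conjugate pair
`a c₁₁ ± i√((a²+b²)(c₁₁²-c₁₂²) - a²c₁₁²)` when `b² > (b*)²`. -/
theorem stmt_4 (a c11 c12 : ℝ) (ha : 0 < a) (hc : |c12| < c11) (hc' : 0 < |c12|) :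
    ∀ b : ℝ,
      let C : Matrix (Fin 2) (Fin 2) ℂ := !![(c11 : ℂ), (c12 : ℂ); (c12 : ℂ), (c11 : ℂ)]
      let M : Matrix (Fin 2) (Fin 2) ℂ :=
        Matrix.diagonal ![(a : ℂ) + b * Complex.I, (a : ℂ) - b * Complex.I] * C
      let bstar : ℝ := a * c12 / Real.sqrt (c11 ^ 2 - c12 ^ 2)
      ((∃! lam : ℂ, lam ∈ spectrum ℂ M) ↔ b ^ 2 = bstar ^ 2) ∧
      (b ^ 2 < bstar ^ 2 →
        ∃ l1 l2 : ℝ, l1 ≠ l2 ∧ spectrum ℂ M = {(l1 : ℂ), (l2 : ℂ)}) ∧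
      (b ^ 2 > bstar ^ 2 →
        0 < (a ^ 2 + b ^ 2) * (c11 ^ 2 - c12 ^ 2) - a ^ 2 * c11 ^ 2 ∧
        spectrum ℂ M =
          {((a * c11 : ℝ) : ℂ) + Complex.I *
              (Real.sqrt ((a ^ 2 + b ^ 2) * (c11 ^ 2 - c12 ^ 2) - a ^ 2 * c11 ^ 2) : ℂ),
           ((a * c11 : ℝ) : ℂ) - Complex.I *
              (Real.sqrt ((a ^ 2 + b ^ 2) * (c11 ^ 2 - c12 ^ 2) - a ^ 2 * c11 ^ 2) : ℂ)}) :=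
  stmt_4_general a c11 c12 hc
end

section
/- Let δ, v : ℝ → ℝ be C² functions with δ(t) > 0 and v(t) > 0 for all t, let |D| > 0 and c ∈ ℝ, and suppose y : ℝ → ℝ is C² and satisfies c·y(t) = −(|D|/δ(t)) · d/dt[ (1/(δ(t)v(t)²)) · d(δ(t)y(t))/dt ]. Define Ψ(t) = (√(δ(t))/v(t)) y(t), w₁(t) = v(t)δ(t)^{3/2}/|D|, w₂(t) = v(t)/√(δ(t)), and w₃(t) = (√(δ(t)) v(t)/2) · d/dt[ (δ(t)v(t)²)^{−3/2} · d(δ(t)v(t)²)/dt ]. Then Ψ satisfies the Hill equation Ψ''(t) + (w₁(t)·c·w₂(t) + w₃(t)) Ψ(t) = 0. -/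
/-!
With `F = δ v²` and `g = δ y`, the capacitance equation reads `(g' / F)' = -(c / |D|) g`, and
`Ψ = g F^{-1/2}`, while `w₁ c w₂ = (c / |D|) F` and `w₃ = (√F / 2) (F^{-3/2} F')'`. This is a
Liouville transformation: for `p = F^{-1/2}` one has `p' = -½ F^{-3/2} F'`, so in
`Ψ'' = g'' p + 2 g' p' + g p''` the term `2 g' p' = -(g' F' / F) p` cancels the first-order part
of `g'' = g' F' / F - (c / |D|) g F`, and `g p'' = -½ g (F^{-3/2} F')' = -w₃ Ψ` because
`√F · F^{-1/2} = 1`.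
-/

open Real

lemma rpow_neg_one_half_eq_inv_sqrt {x : ℝ} (hx : 0 ≤ x) : x ^ (-(1 : ℝ) / 2) = (√x)⁻¹ := by
  rw [sqrt_eq_rpow, ← rpow_neg hx, neg_div]

lemma rpow_neg_three_halves_eq_div {x : ℝ} (hx : 0 < x) :
    x ^ (-(3 : ℝ) / 2) = x ^ (-(1 : ℝ) / 2) / x := by
  rw [← rpow_sub_one hx.ne']
  norm_num

lemma rpow_three_halves_eq_mul_sqrt {x : ℝ} (hx : 0 < x) : x ^ ((3 : ℝ) / 2) = x * √x := by
  rw [show (3 : ℝ) / 2 = 1 + 1 / 2 by norm_num, rpow_add hx, rpow_one, sqrt_eq_rpow]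

lemma hasDerivAt_rpow_neg_one_half {F : ℝ → ℝ} {s : ℝ} (hFs : 0 < F s)
    (hF : DifferentiableAt ℝ F s) :
    HasDerivAt (fun r => F r ^ (-(1 : ℝ) / 2))
      (-(1 / 2) * (F s ^ (-(3 : ℝ) / 2) * deriv F s)) s := by
  convert hF.hasDerivAt.rpow_const (p := -(1 : ℝ) / 2) (Or.inl hFs.ne') using 1
  norm_num
  ring

theorem liouville_transform_hill {F g : ℝ → ℝ} {k t : ℝ} (hF : ∀ s, 0 < F s)
    (hF₁ : Differentiable ℝ F) (hF₂ : DifferentiableAt ℝ (deriv F) t)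
    (hg₁ : Differentiable ℝ g) (hg₂ : DifferentiableAt ℝ (deriv g) t)
    (hsl : deriv (fun s => deriv g s / F s) t = -(k * g t)) :
    deriv (deriv fun s => g s * F s ^ (-(1 : ℝ) / 2)) t
      + (k * F t + √(F t) / 2 * deriv (fun s => F s ^ (-(3 : ℝ) / 2) * deriv F s) t)
        * (g t * F t ^ (-(1 : ℝ) / 2)) = 0 := by
  set p : ℝ → ℝ := fun s => F s ^ (-(1 : ℝ) / 2)
  set w : ℝ → ℝ := fun s => F s ^ (-(3 : ℝ) / 2) * deriv F s
  have hp (s : ℝ) : HasDerivAt p (-(1 / 2) * w s) s :=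
    hasDerivAt_rpow_neg_one_half (hF s) (hF₁ s)
  have hw : HasDerivAt w (deriv w t) t :=
    (((hF₁ t).rpow_const (Or.inl (hF t).ne')).mul hF₂).hasDerivAt
  have hΨ' : deriv (fun s => g s * p s) = fun s => deriv g s * p s + g s * (-(1 / 2) * w s) :=
    funext fun s => ((hg₁ s).hasDerivAt.mul (hp s)).deriv
  have hΨ'' : deriv (deriv fun s => g s * p s) t = deriv (deriv g) t * p t
      + deriv g t * (-(1 / 2) * w t) + (deriv g t * (-(1 / 2) * w t)
        + g t * (-(1 / 2) * deriv w t)) := by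
    rw [hΨ']
    exact ((hg₂.hasDerivAt.mul (hp t)).add ((hg₁ t).hasDerivAt.mul (hw.const_mul _))).deriv
  have hg'' : deriv (deriv g) t = deriv g t * deriv F t / F t - k * g t * F t := by
    rw [(hg₂.hasDerivAt.fun_div (hF₁ t).hasDerivAt (hF t).ne').deriv] at hsl
    have hFt := (hF t).ne'
    field_simp at hsl ⊢
    linear_combination hsl
  have hsqrt : √(F t) * p t = 1 := by
    rw [show p t = _ from rpow_neg_one_half_eq_inv_sqrt (hF t).le,
      mul_inv_cancel₀ (sqrt_pos.2 (hF t)).ne']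
  have hw_t : w t = p t * deriv F t / F t := by
    rw [mul_div_right_comm, ← rpow_neg_three_halves_eq_div (hF t)]
  change _ + _ * (g t * p t) = 0
  rw [hΨ'', hg'', hw_t]
  linear_combination (g t * deriv w t / 2) * hsqrt

/-- Scalar reduction of the capacitance ODE of time-modulated subwavelength
resonators to a Hill equation: if `c y = −(|D|/δ) d/dt[(1/(δv²)) d(δy)/dt]`
then `Ψ = (√δ/v) y` satisfies `Ψ'' + (w₁ c w₂ + w₃)Ψ = 0`. -/
theorem stmt_16 (δ v y : ℝ → ℝ) (hδ : ContDiff ℝ 2 δ) (hv : ContDiff ℝ 2 v)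
    (hy : ContDiff ℝ 2 y) (hδpos : ∀ t, 0 < δ t) (hvpos : ∀ t, 0 < v t)
    (Dvol : ℝ) (hD : 0 < Dvol) (c : ℝ)
    (hode : ∀ t, c * y t =
      -(Dvol / δ t) *
        deriv (fun s => (1 / (δ s * v s ^ 2)) * deriv (fun r => δ r * y r) s) t) :
    let Ψ : ℝ → ℝ := fun t => Real.sqrt (δ t) / v t * y t
    let w₁ : ℝ → ℝ := fun t => v t * δ t ^ ((3 : ℝ) / 2) / Dvol
    let w₂ : ℝ → ℝ := fun t => v t / Real.sqrt (δ t)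
    let w₃ : ℝ → ℝ := fun t => Real.sqrt (δ t) * v t / 2 *
      deriv (fun s => (δ s * v s ^ 2) ^ (-(3 : ℝ) / 2) *
        deriv (fun r => δ r * v r ^ 2) s) t
    ∀ t, deriv (deriv Ψ) t + (w₁ t * c * w₂ t + w₃ t) * Ψ t = 0 := by
  intro Ψ w₁ w₂ w₃ t
  have hF (s : ℝ) : 0 < δ s * v s ^ 2 := mul_pos (hδpos s) (pow_pos (hvpos s) 2)
  have hsqrt_ne (s : ℝ) : √(δ s) ≠ 0 := (sqrt_pos.2 (hδpos s)).ne'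
  have hsqrtF (s : ℝ) : √(δ s * v s ^ 2) = √(δ s) * v s := by
    rw [sqrt_mul (hδpos s).le, sqrt_sq (hvpos s).le]
  have hΨ : Ψ = fun s => δ s * y s * (δ s * v s ^ 2) ^ (-(1 : ℝ) / 2) := by
    funext s
    show √(δ s) / v s * y s = _
    have := hsqrt_ne s
    have := (hvpos s).ne'
    rw [rpow_neg_one_half_eq_inv_sqrt (hF s).le, hsqrtF]
    field_simp
    rw [sq_sqrt (hδpos s).le, mul_comm]
  have hw : w₁ t * c * w₂ t = c / Dvol * (δ t * v t ^ 2) := by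
    have := hsqrt_ne t
    simp only [w₁, w₂, rpow_three_halves_eq_mul_sqrt (hδpos t)]
    field_simp
  have hw₃ : w₃ t = √(δ t * v t ^ 2) / 2 * deriv (fun s => (δ s * v s ^ 2) ^ (-(3 : ℝ) / 2) *
      deriv (fun r => δ r * v r ^ 2) s) t := by
    rw [hsqrtF]
  have hsl : deriv (fun s => deriv (fun r => δ r * y r) s / (δ s * v s ^ 2)) t
      = -(c / Dvol * (δ t * y t)) := by
    have hode_t := hode t
    simp only [one_div_mul_eq_div] at hode_t
    have := (hδpos t).ne'
    have := hD.ne'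
    field_simp at hode_t ⊢
    linear_combination hode_t
  rw [hΨ, hw, hw₃]
  have hFC := hδ.mul (hv.pow 2)
  have hgC := hδ.mul hy
  exact liouville_transform_hill hF (hFC.differentiable two_ne_zero)
    (hFC.differentiable_deriv_two t) (hgC.differentiable two_ne_zero)
    (hgC.differentiable_deriv_two t) hsl
end
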